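/- In VFS, the substitution of a continuation-abstraction for the covariable commutes with the negative translation: for all VFS terms M and N, (Cv(M : y.N))≀ = [λy.N≀/k](M≀). -/
import Mathlib


namespace Paper

mutual
/-- Terms of the value-filling style calculus VFS. -/
inductive VTm : Type
| up : VVal → VTm
| cv : VVal → VCtx → VTm
/-- Values of VFS. -/
inductive VVal : Type
| var : String → VVal
| lam : String → VTm → VVal
/-- Formal contexts of VFS: x.M or (W,x.M). -/
inductive VCtx : Type
| cont : String → VTm → VCtx
| arg : VVal → String → VTm → VCtx
end

mutual
def VVal.sub (V : VVal) (y : String) : VVal → VVal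
| .var z => if z = y then V else .var z
| .lam z M => if z = y then .lam z M else .lam z (VTm.sub V y M)
def VTm.sub (V : VVal) (y : String) : VTm → VTm
| .up W => .up (VVal.sub V y W)
| .cv W c => .cv (VVal.sub V y W) (VCtx.sub V y c)
def VCtx.sub (V : VVal) (y : String) : VCtx → VCtx
| .cont x M => .cont x (if x = y then M else VTm.sub V y M)
| .arg W x M => .arg (VVal.sub V y W) x (if x = y then M else VTm.sub V y M)
end

mutual
/-- The generalized cut Cv(M : c). -/
def VTm.gcut : VTm → VCtx → VTm
| .up V, c => .cv V c
| .cv V c, c' => .cv V (VCtx.comp c c')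
/-- Composition of formal contexts (c : c'). -/
def VCtx.comp : VCtx → VCtx → VCtx
| .cont x M, c' => .cont x (VTm.gcut M c')
| .arg W x M, c' => .arg W x (VTm.gcut M c')
end

mutual
/-- One-step reduction of VFS on terms, closed under all contexts. -/
inductive VStepT : VTm → VTm → Prop
| bv {x M V y N} :
    VStepT (.cv (.lam x M) (.arg V y N)) (.cv V (.cont x (VTm.gcut M (.cont y N))))
| sigmav {V y N} : VStepT (.cv V (.cont y N)) (VTm.sub V y N)
| upC {V V'} : VStepV V V' → VStepT (.up V) (.up V')
| cvV {V V' c} : VStepV V V' → VStepT (.cv V c) (.cv V' c)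
| cvC {V c c'} : VStepC c c' → VStepT (.cv V c) (.cv V c')
/-- One-step reduction of VFS on values. -/
inductive VStepV : VVal → VVal → Prop
| lamC {x M M'} : VStepT M M' → VStepV (.lam x M) (.lam x M')
/-- One-step reduction of VFS on formal contexts. -/
inductive VStepC : VCtx → VCtx → Prop
| contC {x M M'} : VStepT M M' → VStepC (.cont x M) (.cont x M')
| argV {W W' x M} : VStepV W W' → VStepC (.arg W x M) (.arg W' x M)
| argT {W x M M'} : VStepT M M' → VStepC (.arg W x M) (.arg W x M')
end

mutual
/-- Commands of the (modified) CPS target. -/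
inductive CCmd : Type
| kapp : CVal → CCmd
| capp : CCont → CVal → CCmd
| vapp : CVal → CVal → CCont → CCmd
/-- Continuations of CPS. -/
inductive CCont : Type
| abs : String → CCmd → CCont
/-- Values of CPS. -/
inductive CVal : Type
| var : String → CVal
| lam : String → CTm → CVal
/-- Terms of CPS. -/
inductive CTm : Type
| abk : CCmd → CTm
end

mutual
def CVal.sub (V : CVal) (x : String) : CVal → CVal
| .var z => if z = x then V else .var z
| .lam z P => if z = x then .lam z P else .lam z (CTm.sub V x P)
def CCmd.sub (V : CVal) (x : String) : CCmd → CCmd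
| .kapp W => .kapp (CVal.sub V x W)
| .capp K W => .capp (CCont.sub V x K) (CVal.sub V x W)
| .vapp A B K => .vapp (CVal.sub V x A) (CVal.sub V x B) (CCont.sub V x K)
def CCont.sub (V : CVal) (x : String) : CCont → CCont
| .abs z M => if z = x then .abs z M else .abs z (CCmd.sub V x M)
def CTm.sub (V : CVal) (x : String) : CTm → CTm
| .abk M => .abk (CCmd.sub V x M)
end

/-- Substitution [K/k]- of a continuation for the fixed covariable k. -/
def ksub (K : CCont) : CCmd → CCmd
| .kapp V => .capp K V
| .capp (.abs x M) V => .capp (.abs x (ksub K M)) V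
| .vapp V W (.abs x M) => .vapp V W (.abs x (ksub K M))

mutual
/-- One-step reduction of CPS on commands, closed under all contexts. -/
inductive CStepCmd : CCmd → CCmd → Prop
| sigmav {x M V} : CStepCmd (.capp (.abs x M) V) (CCmd.sub V x M)
| bv {x M W K} : CStepCmd (.vapp (.lam x (.abk M)) W K) (.capp (.abs x (ksub K M)) W)
| kappV {V V'} : CStepVal V V' → CStepCmd (.kapp V) (.kapp V')
| cappK {K K' V} : CStepCont K K' → CStepCmd (.capp K V) (.capp K' V)
| cappV {K V V'} : CStepVal V V' → CStepCmd (.capp K V) (.capp K V')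
| vapp1 {V V' W K} : CStepVal V V' → CStepCmd (.vapp V W K) (.vapp V' W K)
| vapp2 {V W W' K} : CStepVal W W' → CStepCmd (.vapp V W K) (.vapp V W' K)
| vapp3 {V W K K'} : CStepCont K K' → CStepCmd (.vapp V W K) (.vapp V W K')
/-- One-step reduction of CPS on continuations. -/
inductive CStepCont : CCont → CCont → Prop
| absC {x M M'} : CStepCmd M M' → CStepCont (.abs x M) (.abs x M')
/-- One-step reduction of CPS on values. -/
inductive CStepVal : CVal → CVal → Prop
| lamC {x P P'} : CStepTm P P' → CStepVal (.lam x P) (.lam x P')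
/-- One-step reduction of CPS on terms. -/
inductive CStepTm : CTm → CTm → Prop
| abkC {M M'} : CStepCmd M M' → CStepTm (.abk M) (.abk M')
end

mutual
/-- The negative translation M≀ : VFS terms to CPS commands. -/
def angT : VTm → CCmd
| .up V => .kapp (ngV V)
| .cv V (.cont x M) => .capp (.abs x (angT M)) (ngV V)
| .cv V (.arg W x M) => .vapp (ngV V) (ngV W) (.abs x (angT M))
/-- The negative translation V~ : VFS values to CPS values. -/
def ngV : VVal → CVal
| .var x => .var x
| .lam x M => .lam x (.abk (angT M))
end

/-- The negative translation M⁻ = λk.M≀ : VFS terms to CPS terms. -/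
def ngT (M : VTm) : CTm := .abk (angT M)

/-- the negative translation sends the generalized cut Cv(M : y.N)
to the substitution of the continuation λy.N≀ for the covariable k in M≀. -/
theorem stmt15 (y : String) (M N : VTm) :
    angT (VTm.gcut M (.cont y N)) = ksub (.abs y (angT N)) (angT M) := by
  match M with
  | .up V => rfl
  | .cv V (.cont x M') =>
      simp only [VTm.gcut, VCtx.comp, angT, ksub, stmt15 y M' N]
  | .cv V (.arg W x M') =>
      simp only [VTm.gcut, VCtx.comp, angT, ksub, stmt15 y M' N]

end Paper
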